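/- arXiv:1504.01085 — 5 statements merged into one kernel-verified Lean document; each statement's English description precedes it below -/
import Mathlib

section
/- Let A be an m×N real matrix satisfying the strong lower restricted isometry property of order 2k with constant θ₋, i.e., θ₋‖x‖₂² ≤ min_{I⊆[m], |I|≥m/2} ‖A_I x‖₂² for all 2k-sparse x ∈ ℝ^N. Then for any k-sparse vectors x, y ∈ ℝ^N, ‖|Ax| − |Ay|‖₂² ≥ θ₋ · min(‖x−y‖₂², ‖x+y‖₂²), where |Ax| denotes the vector of absolute values of the entries of Ax. -/
open Finset

noncomputable section

/-- A vector is `k`-sparse if it has at most `k` nonzero entries. -/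
def sparse {N : ℕ} (k : ℕ) (x : Fin N → ℝ) : Prop :=
  (Finset.univ.filter (fun i => x i ≠ 0)).card ≤ k

/-- Sparsity with a real bound (used for orders like `t·k` with `t` real). -/
def sparseR {N : ℕ} (k : ℝ) (x : Fin N → ℝ) : Prop :=
  ((Finset.univ.filter (fun i => x i ≠ 0)).card : ℝ) ≤ k

/-- The ℓ₁ norm. -/
def l1 {N : ℕ} (x : Fin N → ℝ) : ℝ := ∑ i, |x i|

/-- The squared ℓ₂ norm. -/
def l2sq {N : ℕ} (x : Fin N → ℝ) : ℝ := ∑ i, (x i) ^ 2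

/-- The ℓ₂ norm. -/
def l2 {N : ℕ} (x : Fin N → ℝ) : ℝ := Real.sqrt (l2sq x)

/-- The ℓ_p norm for real `p ≥ 1`. -/
def lpnorm {N : ℕ} (p : ℝ) (x : Fin N → ℝ) : ℝ := (∑ i, |x i| ^ p) ^ (1 / p)

/-- Best `k`-term approximation error in ℓ₁. -/
def sigma1 {N : ℕ} (k : ℕ) (x : Fin N → ℝ) : ℝ :=
  sInf {t | ∃ z : Fin N → ℝ, sparse k z ∧ t = l1 (x - z)}

/-- Best `k`-term approximation error in a general norm `X`. -/
def sigmaX {N : ℕ} (X : (Fin N → ℝ) → ℝ) (k : ℕ) (x : Fin N → ℝ) : ℝ :=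
  sInf {t | ∃ z : Fin N → ℝ, sparse k z ∧ t = X (x - z)}

/-- Best `k`-term approximation error in the ℓ_q norm. -/
def sigmaQ {N : ℕ} (q : ℝ) (k : ℕ) (x : Fin N → ℝ) : ℝ :=
  sInf {t | ∃ z : Fin N → ℝ, sparse k z ∧ t = lpnorm q (x - z)}

/-- The entrywise absolute value of `A x`. -/
def absMulVec {m N : ℕ} (A : Matrix (Fin m) (Fin N) ℝ) (x : Fin N → ℝ) : Fin m → ℝ :=
  fun i => |A.mulVec x i|

/-- `X` is a norm on `ℝ^N`: triangle inequality, absolute homogeneity, definiteness. -/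
def IsNorm {N : ℕ} (X : (Fin N → ℝ) → ℝ) : Prop :=
  (∀ x y, X (x + y) ≤ X x + X y) ∧ (∀ (c : ℝ) (x), X (c • x) = |c| * X x) ∧
  (∀ x, X x = 0 → x = 0)

/-! Since `(|a| - |b|)² = min ((a - b)², (a + b)²)`, the right-hand side is `∑ᵢ min (uᵢ², vᵢ²)` with
`u = A (x - y)` and `v = A (x + y)`. Either `{i | uᵢ² ≤ vᵢ²}` or its complement has at least `m / 2`
elements; on it the sum dominates `∑ uᵢ²` resp. `∑ vᵢ²`, and the strong lower RIP applied to the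
`2k`-sparse vector `x - y` resp. `x + y` on that half bounds this from below. -/

lemma abs_sub_abs_sq_eq_min (a b : ℝ) : (|a| - |b|) ^ 2 = min ((a - b) ^ 2) ((a + b) ^ 2) := by
  rcases le_total 0 (a * b) with h | h
  · have hab : |a| * |b| = a * b := by rw [← abs_mul, abs_of_nonneg h]
    rw [min_eq_left (by nlinarith)]
    linear_combination sq_abs a + sq_abs b - 2 * hab
  · have hab : |a| * |b| = -(a * b) := by rw [← abs_mul, abs_of_nonpos h]
    rw [min_eq_right (by nlinarith)]
    linear_combination sq_abs a + sq_abs b - 2 * hab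

lemma sparse_add_of_ne_zero_imp_or {N k l : ℕ} {x y z : Fin N → ℝ} (hx : sparse k x) (hy : sparse l y)
    (hz : ∀ i, z i ≠ 0 → x i ≠ 0 ∨ y i ≠ 0) : sparse (k + l) z := by
  unfold sparse at *
  calc #{i | z i ≠ 0} ≤ #(univ.filter (x · ≠ 0) ∪ univ.filter (y · ≠ 0)) :=
        card_le_card fun i hi => by simpa using hz i (by simpa using hi)
    _ ≤ #{i | x i ≠ 0} + #{i | y i ≠ 0} := card_union_le _ _
    _ ≤ k + l := by omega

lemma sparse_sub {N k l : ℕ} {x y : Fin N → ℝ} (hx : sparse k x) (hy : sparse l y) :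
    sparse (k + l) (x - y) :=
  sparse_add_of_ne_zero_imp_or hx hy fun i hi => by
    by_contra! h
    simp [h] at hi

lemma sparse_add {N k l : ℕ} {x y : Fin N → ℝ} (hx : sparse k x) (hy : sparse l y) :
    sparse (k + l) (x + y) :=
  sparse_add_of_ne_zero_imp_or hx hy fun i hi => by
    by_contra! h
    simp [h] at hi

lemma exists_half_card_forall_le_or_forall_ge {ι α : Type*} [Fintype ι] [LinearOrder α]
    (f g : ι → α) :
    ∃ I : Finset ι, (Fintype.card ι : ℝ) / 2 ≤ #I ∧ ((∀ i ∈ I, f i ≤ g i) ∨ (∀ i ∈ I, g i ≤ f i)) := by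
  classical
  set I : Finset ι := {i | f i ≤ g i}
  have hcard : (#I : ℝ) + #Iᶜ = Fintype.card ι := by exact_mod_cast card_add_card_compl I
  rcases le_or_gt ((Fintype.card ι : ℝ) / 2) #I with hI | hI
  · exact ⟨I, hI, .inl fun i hi => by simpa [I] using hi⟩
  · exact ⟨Iᶜ, by linarith, .inr fun i hi => (not_le.mp (by simpa [I] using hi)).le⟩

lemma sum_le_sum_min_of_forall_le {ι : Type*} [Fintype ι] {f g : ι → ℝ} (hf : ∀ i, 0 ≤ f i)
    (hg : ∀ i, 0 ≤ g i) {I : Finset ι} (hI : ∀ i ∈ I, f i ≤ g i) :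
    ∑ i ∈ I, f i ≤ ∑ i, min (f i) (g i) :=
  calc ∑ i ∈ I, f i = ∑ i ∈ I, min (f i) (g i) := sum_congr rfl fun i hi => (min_eq_left (hI i hi)).symm
    _ ≤ ∑ i, min (f i) (g i) :=
      sum_le_sum_of_subset_of_nonneg (subset_univ I) fun i _ _ => le_min (hf i) (hg i)

lemma mul_min_le_sum_min {ι : Type*} [Fintype ι] {θ a b : ℝ} {f g : ι → ℝ} (ha : 0 ≤ a)
    (hb : 0 ≤ b) (hf : ∀ i, 0 ≤ f i) (hg : ∀ i, 0 ≤ g i)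
    (hfa : ∀ I : Finset ι, (Fintype.card ι : ℝ) / 2 ≤ #I → θ * a ≤ ∑ i ∈ I, f i)
    (hgb : ∀ I : Finset ι, (Fintype.card ι : ℝ) / 2 ≤ #I → θ * b ≤ ∑ i ∈ I, g i) :
    θ * min a b ≤ ∑ i, min (f i) (g i) := by
  rcases le_total θ 0 with hθ | hθ
  · exact (mul_nonpos_of_nonpos_of_nonneg hθ (le_min ha hb)).trans
      (sum_nonneg fun i _ => le_min (hf i) (hg i))
  obtain ⟨I, hI, hfg | hgf⟩ := exists_half_card_forall_le_or_forall_ge f g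
  · calc θ * min a b ≤ θ * a := by gcongr; exact min_le_left a b
      _ ≤ ∑ i ∈ I, f i := hfa I hI
      _ ≤ ∑ i, min (f i) (g i) := sum_le_sum_min_of_forall_le hf hg hfg
  · calc θ * min a b ≤ θ * b := by gcongr; exact min_le_right a b
      _ ≤ ∑ i ∈ I, g i := hgb I hI
      _ ≤ ∑ i, min (f i) (g i) := by
        simpa only [min_comm] using sum_le_sum_min_of_forall_le hg hf hgf

/-- strong lower RIP of order 2k implies stability of the phaseless map. -/
theorem stmt0 {m N k : ℕ} (A : Matrix (Fin m) (Fin N) ℝ) (θminus : ℝ)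
    (hSRIP : ∀ x : Fin N → ℝ, sparse (2 * k) x →
      ∀ I : Finset (Fin m), (m : ℝ) / 2 ≤ I.card →
        θminus * l2sq x ≤ ∑ i ∈ I, (A.mulVec x i) ^ 2) :
    ∀ x y : Fin N → ℝ, sparse k x → sparse k y →
      θminus * min (l2sq (x - y)) (l2sq (x + y)) ≤
        ∑ i, (|A.mulVec x i| - |A.mulVec y i|) ^ 2 := by
  intro x y hx hy
  have hmin : ∀ i, (|A.mulVec x i| - |A.mulVec y i|) ^ 2 =
      min (A.mulVec (x - y) i ^ 2) (A.mulVec (x + y) i ^ 2) := fun i => by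
    rw [abs_sub_abs_sq_eq_min, Matrix.mulVec_sub, Matrix.mulVec_add, Pi.sub_apply, Pi.add_apply]
  rw [two_mul] at hSRIP
  simp_rw [hmin]
  refine mul_min_le_sum_min (sum_nonneg fun i _ => sq_nonneg _) (sum_nonneg fun i _ => sq_nonneg _)
    (fun i => sq_nonneg _) (fun i => sq_nonneg _) ?_ ?_
  · simpa only [Fintype.card_fin] using hSRIP (x - y) (sparse_sub hx hy)
  · simpa only [Fintype.card_fin] using hSRIP (x + y) (sparse_add hx hy)
end
end

section
/- Let a₁ ≥ a₂ ≥ ⋯ ≥ a_m ≥ 0 be real numbers, let r ≤ m and λ ≥ 0 satisfy Σ_{i=1}^{r} a_i + λ ≥ Σ_{i=r+1}^{m} a_i. Then for all real α ≥ 1, Σ_{j=r+1}^{m} a_j^α ≤ r·((Σ_{i=1}^{r} a_i^α / r)^{1/α} + λ/r)^α. -/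
open Finset

noncomputable section

/-! Let `P` be the `α`-power mean of the head `a₀, …, a_{r-1}`. Every tail entry is at most every
head entry, hence at most `P`, and by the power-mean inequality the head sum is at most `r * P`;
so the tail entries lie in `[0, M]` with `M = P + λ / r` and sum to at most `r * M`. For such
numbers `x ^ α ≤ x * M ^ (α - 1)`, which sums to the claimed bound `r * M ^ α`. -/

section PowerMeans

variable {ι : Type*} (s : Finset ι) (x : ι → ℝ) {p : ℝ}

theorem Real.sum_le_card_mul_rpow_mean (hx : ∀ i ∈ s, 0 ≤ x i) (hp : 1 ≤ p) :
    ∑ i ∈ s, x i ≤ #s * ((∑ i ∈ s, x i ^ p) / #s) ^ (1 / p) := by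
  rcases s.eq_empty_or_nonempty with rfl | hs
  · simp
  have hcard : (0 : ℝ) < #s := by exact_mod_cast hs.card_pos
  have hmean := Real.arith_mean_le_rpow_mean s (fun _ => (#s : ℝ)⁻¹) x
    (fun _ _ => by positivity) (by simp [hcard.ne']) hx hp
  simp only [inv_mul_eq_div, ← sum_div] at hmean
  calc ∑ i ∈ s, x i = #s * ((∑ i ∈ s, x i) / #s) := by field_simp
    _ ≤ _ := by gcongr

theorem Real.le_rpow_mean_of_forall_le (hs : s.Nonempty) {y : ℝ} (hy : 0 ≤ y)
    (hyx : ∀ i ∈ s, y ≤ x i) (hp : 0 < p) :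
    y ≤ ((∑ i ∈ s, x i ^ p) / #s) ^ (1 / p) := by
  have hcard : (0 : ℝ) < #s := by exact_mod_cast hs.card_pos
  have hsum : #s * y ^ p ≤ ∑ i ∈ s, x i ^ p := by
    simpa using s.card_nsmul_le_sum (fun i => x i ^ p) (y ^ p)
      fun i hi => Real.rpow_le_rpow hy (hyx i hi) hp.le
  calc y = (y ^ p) ^ (1 / p) := by rw [one_div, Real.rpow_rpow_inv hy hp.ne']
    _ ≤ _ := by gcongr; rwa [le_div_iff₀ hcard, mul_comm]

theorem Real.sum_rpow_le_of_le_of_sum_le {M c : ℝ} (hM : 0 ≤ M) (hx : ∀ i ∈ s, 0 ≤ x i)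
    (hxM : ∀ i ∈ s, x i ≤ M) (hsum : ∑ i ∈ s, x i ≤ c * M) (hp : 1 ≤ p) :
    ∑ i ∈ s, x i ^ p ≤ c * M ^ p := by
  have hsplit : ∀ {t : ℝ}, 0 ≤ t → t ^ p = t * t ^ (p - 1) := fun ht => by
    rw [← Real.rpow_one_add' ht (by linarith : (0 : ℝ) < 1 + (p - 1)).ne', add_sub_cancel]
  calc ∑ i ∈ s, x i ^ p ≤ ∑ i ∈ s, x i * M ^ (p - 1) := by
        refine sum_le_sum fun i hi => ?_
        rw [hsplit (hx i hi)]
        exact mul_le_mul_of_nonneg_left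
          (Real.rpow_le_rpow (hx i hi) (hxM i hi) (by linarith)) (hx i hi)
    _ = (∑ i ∈ s, x i) * M ^ (p - 1) := by rw [sum_mul]
    _ ≤ c * M * M ^ (p - 1) := by gcongr
    _ = c * M ^ p := by rw [mul_assoc, ← hsplit hM]

end PowerMeans

/-- Lemma 5.3, sum comparison for nonincreasing nonnegative sequences. -/
theorem stmt1 (m r : ℕ) (a : ℕ → ℝ) (lam : ℝ)
    (hr : 0 < r) (hrm : r ≤ m)
    (hmono : ∀ i j : ℕ, i ≤ j → j < m → a j ≤ a i)
    (hnonneg : ∀ i : ℕ, i < m → 0 ≤ a i)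
    (hlam : 0 ≤ lam)
    (hsum : ∑ i ∈ Finset.Ico r m, a i ≤ ∑ i ∈ Finset.range r, a i + lam) :
    ∀ α : ℝ, 1 ≤ α →
      ∑ j ∈ Finset.Ico r m, a j ^ α ≤
        (r : ℝ) * (((∑ i ∈ Finset.range r, a i ^ α) / r) ^ (1 / α) + lam / r) ^ α := by
  intro α hα
  set P := ((∑ i ∈ range r, a i ^ α) / r) ^ (1 / α)
  have hrpos : (0 : ℝ) < r := by exact_mod_cast hr
  have hhead_nonneg : ∀ i ∈ range r, 0 ≤ a i := fun i hi =>
    hnonneg i ((mem_range.mp hi).trans_le hrm)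
  have hP : 0 ≤ P := Real.rpow_nonneg (div_nonneg (sum_nonneg fun i hi =>
    Real.rpow_nonneg (hhead_nonneg i hi) α) hrpos.le) _
  have hlam_r : 0 ≤ lam / r := by positivity
  have htail_le : ∀ j ∈ Ico r m, a j ≤ P + lam / r := by
    intro j hj
    obtain ⟨hrj, hjm⟩ := mem_Ico.mp hj
    have hle_mean := Real.le_rpow_mean_of_forall_le (range r) a (nonempty_range_iff.mpr hr.ne')
      (hnonneg j hjm) (fun i hi => hmono i j ((mem_range.mp hi).le.trans hrj) hjm)
      (by linarith : (0 : ℝ) < α)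
    rw [card_range] at hle_mean
    linarith
  have hhead := Real.sum_le_card_mul_rpow_mean (range r) a hhead_nonneg hα
  rw [card_range] at hhead
  refine Real.sum_rpow_le_of_le_of_sum_le _ _ (add_nonneg hP hlam_r)
    (fun j hj => hnonneg j (mem_Ico.mp hj).2) htail_le ?_ hα
  calc ∑ i ∈ Ico r m, a i ≤ r * P + lam := by linarith
    _ = r * (P + lam / r) := by field_simp
end
end

section
/- Let a₁ ≥ a₂ ≥ ⋯ ≥ a_m ≥ 0 satisfy Σ_{i=1}^{r} a_i ≥ Σ_{i=r+1}^{m} a_i for some r ≤ m. Then for all α ≥ 1, Σ_{j=r+1}^{m} a_j^α ≤ Σ_{i=1}^{r} a_i^α. -/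
open Finset

noncomputable section

theorem Real.rpow_eq_rpow_sub_one_mul {x α : ℝ} (hx : 0 ≤ x) (hα : 1 ≤ α) :
    x ^ α = x ^ (α - 1) * x := by
  rw [← Real.rpow_add_one' hx (by linarith), sub_add_cancel]

/-- Both sums are compared with `c ^ (α - 1)` times the corresponding plain sums. -/
theorem Finset.sum_rpow_le_sum_rpow_of_le_threshold {ι : Type*} {s t : Finset ι} {f : ι → ℝ}
    {c α : ℝ} (hα : 1 ≤ α) (hc : 0 ≤ c)
    (hs : ∀ j ∈ s, 0 ≤ f j ∧ f j ≤ c) (ht : ∀ i ∈ t, c ≤ f i)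
    (hsum : ∑ j ∈ s, f j ≤ ∑ i ∈ t, f i) :
    ∑ j ∈ s, f j ^ α ≤ ∑ i ∈ t, f i ^ α := by
  have hα₀ : 0 ≤ α - 1 := by linarith
  have below : ∀ j ∈ s, f j ^ α ≤ c ^ (α - 1) * f j := fun j hj => by
    obtain ⟨h0, hle⟩ := hs j hj
    rw [Real.rpow_eq_rpow_sub_one_mul h0 hα]
    exact mul_le_mul_of_nonneg_right (Real.rpow_le_rpow h0 hle hα₀) h0
  have above : ∀ i ∈ t, c ^ (α - 1) * f i ≤ f i ^ α := fun i hi => by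
    have h0 : 0 ≤ f i := hc.trans (ht i hi)
    rw [Real.rpow_eq_rpow_sub_one_mul h0 hα]
    exact mul_le_mul_of_nonneg_right (Real.rpow_le_rpow hc (ht i hi) hα₀) h0
  calc ∑ j ∈ s, f j ^ α
      ≤ c ^ (α - 1) * ∑ j ∈ s, f j := by rw [mul_sum]; exact sum_le_sum below
    _ ≤ c ^ (α - 1) * ∑ i ∈ t, f i := mul_le_mul_of_nonneg_left hsum (Real.rpow_nonneg hc _)
    _ ≤ ∑ i ∈ t, f i ^ α := by rw [mul_sum]; exact sum_le_sum above

theorem stmt2_general (m r : ℕ) (a : ℕ → ℝ)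
    (hrm : r ≤ m)
    (hmono : ∀ i j : ℕ, i ≤ j → j < m → a j ≤ a i)
    (hnonneg : ∀ i : ℕ, i < m → 0 ≤ a i)
    (hsum : ∑ i ∈ Finset.Ico r m, a i ≤ ∑ i ∈ Finset.range r, a i) :
    ∀ α : ℝ, 1 ≤ α →
      ∑ j ∈ Finset.Ico r m, a j ^ α ≤ ∑ i ∈ Finset.range r, a i ^ α := by
  intro α hα
  rcases lt_or_eq_of_le hrm with hrm | rfl
  · refine sum_rpow_le_sum_rpow_of_le_threshold hα (hnonneg r hrm) (fun j hj => ?_)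
      (fun i hi => ?_) hsum
    · obtain ⟨hrj, hjm⟩ := mem_Ico.mp hj
      exact ⟨hnonneg j hjm, hmono r j hrj hjm⟩
    · exact hmono i r (mem_range.mp hi).le hrm
  · rw [Ico_self, sum_empty]
    exact sum_nonneg fun i hi => Real.rpow_nonneg (hnonneg i (mem_range.mp hi)) _

/-- the `λ = 0` case of the sum comparison lemma. -/
theorem stmt2 (m r : ℕ) (a : ℕ → ℝ)
    (hr : 0 < r) (hrm : r ≤ m)
    (hmono : ∀ i j : ℕ, i ≤ j → j < m → a j ≤ a i)
    (hnonneg : ∀ i : ℕ, i < m → 0 ≤ a i)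
    (hsum : ∑ i ∈ Finset.Ico r m, a i ≤ ∑ i ∈ Finset.range r, a i) :
    ∀ α : ℝ, 1 ≤ α →
      ∑ j ∈ Finset.Ico r m, a j ^ α ≤ ∑ i ∈ Finset.range r, a i ^ α :=
  stmt2_general m r a hrm hmono hnonneg hsum
end
end

section
/- Let s ≥ 1 be an integer and α > 0. Define T(α,s) := {u ∈ ℝ^n : ‖u‖_∞ ≤ α, ‖u‖₁ ≤ sα}. For v ∈ ℝ^n define U(α,s,v) := {u ∈ ℝ^n : supp(u) ⊆ supp(v), ‖u‖₀ ≤ s, ‖u‖₁ = ‖v‖₁, ‖u‖_∞ ≤ α}. Then v ∈ T(α,s) if and only if v lies in the convex hull of U(α,s,v). -/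
open Finset

noncomputable section

/-!
Every atom is `s`-sparse with entries bounded by `α`, hence has `ℓ₁` norm at most `sα`, and the
polytope `{u | ‖u‖_∞ ≤ α, ‖u‖₁ ≤ sα}` is convex; this gives one inclusion. Conversely, induct on
the number of fractional coordinates `0 < |v i| < α`. If there is at most one, the bound
`‖v‖₁ ≤ sα` forces `v` itself to be `s`-sparse. Otherwise pick two of them, `i` and `j`, and move
`ℓ₁` mass between them, keeping signs, in either direction until one of `|v i|`, `|v j|` reaches
`0` or `α`. The two vectors so obtained keep the `ℓ₁` norm of `v`, have support inside that of
`v` and fewer fractional coordinates, and `v` lies on the segment joining them.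
-/

lemma mem_segment_add_smul {E : Type*} [AddCommGroup E] [Module ℝ E] (x d : E) {a b : ℝ}
    (ha : a ≤ 0) (hb : 0 ≤ b) : x ∈ segment ℝ (x + a • d) (x + b • d) := by
  rw [mem_segment_iff_sameRay, sub_add_cancel_left, add_sub_cancel_left, ← neg_smul]
  exact ((SameRay.refl d).nonneg_smul_left (neg_nonneg.mpr ha)).nonneg_smul_right hb

variable {n : ℕ}

def fracSupport (α : ℝ) (v : Fin n → ℝ) : Finset (Fin n) :=
  {i | 0 < |v i| ∧ |v i| < α}

lemma mem_fracSupport {α : ℝ} {v : Fin n → ℝ} {i : Fin n} :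
    i ∈ fracSupport α v ↔ |v i| ∈ Set.Ioo 0 α := by
  simp [fracSupport]

def sparseAtoms (s : ℕ) (α : ℝ) (v : Fin n → ℝ) : Set (Fin n → ℝ) :=
  {u | Function.support u ⊆ Function.support v ∧ sparse s u ∧ l1 u = l1 v ∧ ∀ i, |u i| ≤ α}

lemma sparseAtoms_mono {s : ℕ} {α : ℝ} {v w : Fin n → ℝ}
    (hsupp : Function.support w ⊆ Function.support v) (hl1 : l1 w = l1 v) :
    sparseAtoms s α w ⊆ sparseAtoms s α v :=
  fun _ ⟨hu, hsp, hl, hb⟩ => ⟨hu.trans hsupp, hsp, hl.trans hl1, hb⟩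

lemma convexOn_l1 : ConvexOn ℝ Set.univ (l1 : (Fin n → ℝ) → ℝ) := by
  refine ⟨convex_univ, fun x _ y _ a b ha hb _ => ?_⟩
  simp only [l1, smul_eq_mul, mul_sum, ← sum_add_distrib]
  refine sum_le_sum fun i _ => (abs_add_le _ _).trans_eq ?_
  simp [abs_mul, abs_of_nonneg ha, abs_of_nonneg hb]

lemma convex_setOf_abs_le_and_l1_le (s : ℕ) (α : ℝ) :
    Convex ℝ {u : Fin n → ℝ | (∀ i, |u i| ≤ α) ∧ l1 u ≤ s * α} := by
  have hbox : {u : Fin n → ℝ | ∀ i, |u i| ≤ α} = Set.univ.pi fun _ => Set.Icc (-α) α := by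
    ext u
    simp only [Set.mem_ofPred_eq, Set.mem_pi, Set.mem_univ, true_implies, Set.mem_Icc, abs_le]
  show Convex ℝ ({u | ∀ i, |u i| ≤ α} ∩ {u | l1 u ≤ s * α})
  exact (hbox ▸ convex_pi fun _ _ => convex_Icc _ _).inter
    (by simpa using convexOn_l1.convex_le (s * α))

lemma l1_le_of_sparse {s : ℕ} {α : ℝ} {u : Fin n → ℝ} (hα : 0 ≤ α) (hs : sparse s u)
    (hu : ∀ i, |u i| ≤ α) : l1 u ≤ s * α :=
  calc l1 u = ∑ i with u i ≠ 0, |u i| := by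
        rw [sum_filter]; exact sum_congr rfl fun i _ => by split_ifs with h <;> simp_all
    _ ≤ #{i | u i ≠ 0} * α := by simpa using sum_le_sum fun i (_ : i ∈ _) => hu i
    _ ≤ s * α := by gcongr; exact_mod_cast hs

theorem convexHull_sparseAtoms_subset {s : ℕ} {α : ℝ} (hα : 0 ≤ α) (v : Fin n → ℝ) :
    convexHull ℝ (sparseAtoms s α v) ⊆ {u | (∀ i, |u i| ≤ α) ∧ l1 u ≤ s * α} :=
  convexHull_min (fun _ ⟨_, hsp, _, hu⟩ => ⟨hu, l1_le_of_sparse hα hsp hu⟩)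
    (convex_setOf_abs_le_and_l1_le s α)

lemma sparse_of_card_fracSupport_le_one {s : ℕ} {α : ℝ} {v : Fin n → ℝ} (hα : 0 < α)
    (hv : ∀ i, |v i| ≤ α) (hl : l1 v ≤ s * α) (hF : #(fracSupport α v) ≤ 1) : sparse s v := by
  set A : Finset (Fin n) := {i | |v i| = α}
  set F := fracSupport α v
  have hdisj : Disjoint A F := disjoint_filter.mpr fun i _ hiA hiF => hiF.2.ne hiA
  have hsupp : ({i | v i ≠ 0} : Finset (Fin n)) = A ∪ F := by
    ext i
    simp only [A, F, fracSupport, mem_union, mem_filter, mem_univ, true_and, abs_pos]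
    rcases (hv i).eq_or_lt with h | h
    · simp [h, ← abs_pos, hα]
    · simp [h, h.ne]
  have hsum : α * #A + ∑ i ∈ F, |v i| ≤ s * α :=
    calc α * #A + ∑ i ∈ F, |v i| = ∑ i ∈ A ∪ F, |v i| := by
          rw [sum_union hdisj, sum_congr rfl fun i hi => (mem_filter.mp hi).2, sum_const,
            nsmul_eq_mul, mul_comm]
      _ ≤ l1 v := sum_le_sum_of_subset_of_nonneg (subset_univ _) fun i _ _ => abs_nonneg _
      _ ≤ s * α := hl
  unfold sparse
  rw [hsupp, card_union_of_disjoint hdisj]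
  rcases Nat.le_one_iff_eq_zero_or_eq_one.mp hF with h0 | h1
  · rw [card_eq_zero.mp h0, sum_empty, add_zero, mul_comm] at hsum
    rw [h0, add_zero]
    exact_mod_cast le_of_mul_le_mul_right hsum hα
  · obtain ⟨j, hj⟩ := card_eq_one.mp h1
    have hvj : 0 < |v j| := (mem_filter.mp (hj ▸ mem_singleton_self j : j ∈ F)).2.1
    rw [hj, sum_singleton] at hsum
    have : (#A : ℝ) < s := lt_of_mul_lt_mul_left (by linarith) hα.le
    rw [h1]; exact_mod_cast this

section AbsEqOff

variable {α : ℝ} {v w : Fin n → ℝ} {i j : Fin n}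

lemma l1_eq_of_abs_eq_of_ne (hij : i ≠ j) (hw : ∀ k, k ≠ i → k ≠ j → |w k| = |v k|)
    (hwij : |w i| + |w j| = |v i| + |v j|) : l1 w = l1 v := by
  rw [← sub_eq_zero, l1, l1, ← sum_sub_distrib,
    Fintype.sum_eq_add i j hij fun k hk => sub_eq_zero.mpr (hw k hk.1 hk.2)]
  linarith

lemma support_subset_of_abs_eq_of_ne (hvi : v i ≠ 0) (hvj : v j ≠ 0)
    (hw : ∀ k, k ≠ i → k ≠ j → |w k| = |v k|) : Function.support w ⊆ Function.support v := by
  intro k hk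
  by_cases hki : k = i; · exact hki ▸ hvi
  by_cases hkj : k = j; · exact hkj ▸ hvj
  rwa [Function.mem_support, ← abs_ne_zero, hw k hki hkj, abs_ne_zero] at hk

lemma fracSupport_subset_of_abs_eq_of_ne (hi : i ∈ fracSupport α v) (hj : j ∈ fracSupport α v)
    (hw : ∀ k, k ≠ i → k ≠ j → |w k| = |v k|) : fracSupport α w ⊆ fracSupport α v := by
  intro k hk
  by_cases hki : k = i; · exact hki ▸ hi
  by_cases hkj : k = j; · exact hkj ▸ hj
  simpa only [fracSupport, mem_filter, hw k hki hkj] using hk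

end AbsEqOff

section Transfer

variable {v : Fin n → ℝ} {i j : Fin n} {t : ℝ}

/-- Moving `ℓ₁` mass from coordinate `j` to coordinate `i` along this direction keeps the signs
of both coordinates, as long as neither crosses zero. -/
def transfer (v : Fin n → ℝ) (i j : Fin n) : Fin n → ℝ :=
  Pi.single i (SignType.sign (v i) : ℝ) - Pi.single j (SignType.sign (v j) : ℝ)

lemma add_smul_transfer_apply_of_ne {k : Fin n} (hki : k ≠ i) (hkj : k ≠ j) :
    (v + t • transfer v i j) k = v k := by
  simp [transfer, hki, hkj]

lemma abs_sign_eq_one_of_ne_zero {x : ℝ} (hx : x ≠ 0) : |(SignType.sign x : ℝ)| = 1 := by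
  rcases hx.lt_or_gt with h | h
  · simp [sign_neg h]
  · simp [sign_pos h]

lemma abs_add_smul_transfer_apply_left (hij : i ≠ j) (hvi : v i ≠ 0) (ht : 0 ≤ |v i| + t) :
    |(v + t • transfer v i j) i| = |v i| + t := by
  have : (v + t • transfer v i j) i = SignType.sign (v i) * (|v i| + t) := by
    rw [mul_add, sign_mul_abs]; simp [transfer, hij, mul_comm t]
  rw [this, abs_mul, abs_sign_eq_one_of_ne_zero hvi, one_mul, abs_of_nonneg ht]

lemma abs_add_smul_transfer_apply_right (hij : i ≠ j) (hvj : v j ≠ 0) (ht : 0 ≤ |v j| - t) :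
    |(v + t • transfer v i j) j| = |v j| - t := by
  have : (v + t • transfer v i j) j = SignType.sign (v j) * (|v j| - t) := by
    rw [mul_sub, sign_mul_abs]; simp [transfer, hij.symm, mul_comm t, sub_eq_add_neg]
  rw [this, abs_mul, abs_sign_eq_one_of_ne_zero hvj, one_mul, abs_of_nonneg ht]

lemma add_smul_transfer_reduces {α : ℝ} (hv : ∀ k, |v k| ≤ α) (hi : i ∈ fracSupport α v)
    (hj : j ∈ fracSupport α v) (hij : i ≠ j) (hti : |v i| + t ∈ Set.Icc 0 α)
    (htj : |v j| - t ∈ Set.Icc 0 α) (hend : |v i| + t ∉ Set.Ioo 0 α ∨ |v j| - t ∉ Set.Ioo 0 α) :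
    (∀ k, |(v + t • transfer v i j) k| ≤ α) ∧ l1 (v + t • transfer v i j) = l1 v ∧
      Function.support (v + t • transfer v i j) ⊆ Function.support v ∧
      fracSupport α (v + t • transfer v i j) ⊂ fracSupport α v := by
  set w := v + t • transfer v i j
  have hvi : v i ≠ 0 := abs_pos.mp (mem_fracSupport.mp hi).1
  have hvj : v j ≠ 0 := abs_pos.mp (mem_fracSupport.mp hj).1
  have hwi : |w i| = |v i| + t := abs_add_smul_transfer_apply_left hij hvi hti.1
  have hwj : |w j| = |v j| - t := abs_add_smul_transfer_apply_right hij hvj htj.1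
  have hoff : ∀ k, k ≠ i → k ≠ j → |w k| = |v k| := fun k hki hkj => by
    rw [show w k = v k from add_smul_transfer_apply_of_ne hki hkj]
  refine ⟨fun k => ?_, l1_eq_of_abs_eq_of_ne hij hoff (by rw [hwi, hwj]; ring),
    support_subset_of_abs_eq_of_ne hvi hvj hoff,
    (ssubset_iff_of_subset (fracSupport_subset_of_abs_eq_of_ne hi hj hoff)).mpr ?_⟩
  · by_cases hki : k = i; · exact hki ▸ hwi ▸ hti.2
    by_cases hkj : k = j; · exact hkj ▸ hwj ▸ htj.2
    exact hoff k hki hkj ▸ hv k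
  · rcases hend with h | h
    · exact ⟨i, hi, by rwa [mem_fracSupport, hwi]⟩
    · exact ⟨j, hj, by rwa [mem_fracSupport, hwj]⟩

lemma exists_mem_segment_fracSupport_ssubset {α : ℝ} (hv : ∀ k, |v k| ≤ α)
    (hi : i ∈ fracSupport α v) (hj : j ∈ fracSupport α v) (hij : i ≠ j) :
    ∃ w₁ w₂, v ∈ segment ℝ w₁ w₂ ∧ ∀ w ∈ ({w₁, w₂} : Set (Fin n → ℝ)),
      (∀ k, |w k| ≤ α) ∧ l1 w = l1 v ∧ Function.support w ⊆ Function.support v ∧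
        fracSupport α w ⊂ fracSupport α v := by
  obtain ⟨hi₀, hiα⟩ := mem_fracSupport.mp hi
  obtain ⟨hj₀, hjα⟩ := mem_fracSupport.mp hj
  set t₁ := min |v i| (α - |v j|)
  set t₂ := min (α - |v i|) |v j|
  have ht₁ : 0 ≤ t₁ := le_min hi₀.le (by linarith)
  have ht₂ : 0 ≤ t₂ := le_min (by linarith) hj₀.le
  refine ⟨v + (-t₁) • transfer v i j, v + t₂ • transfer v i j,
    mem_segment_add_smul _ _ (neg_nonpos.mpr ht₁) ht₂, ?_⟩
  rintro w (rfl | rfl)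
  · refine add_smul_transfer_reduces hv hi hj hij ⟨?_, ?_⟩ ⟨?_, ?_⟩ ?_
    · linarith [min_le_left |v i| (α - |v j|)]
    · linarith [hv i]
    · linarith
    · linarith [min_le_right |v i| (α - |v j|)]
    · rcases min_choice |v i| (α - |v j|) with h | h <;> simp [t₁, h]
  · refine add_smul_transfer_reduces hv hi hj hij ⟨?_, ?_⟩ ⟨?_, ?_⟩ ?_
    · linarith
    · linarith [min_le_left (α - |v i|) |v j|]
    · linarith [min_le_right (α - |v i|) |v j|]
    · linarith [hv j]
    · rcases min_choice (α - |v i|) |v j| with h | h <;> simp [t₂, h]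

end Transfer

theorem mem_convexHull_sparseAtoms {s : ℕ} {α : ℝ} (hα : 0 < α) {v : Fin n → ℝ}
    (hv : ∀ i, |v i| ≤ α) (hl : l1 v ≤ s * α) : v ∈ convexHull ℝ (sparseAtoms s α v) := by
  induction hF : #(fracSupport α v) using Nat.strong_induction_on generalizing v with
  | _ m ih =>
  by_cases hm : m ≤ 1
  · exact subset_convexHull ℝ _
      ⟨subset_rfl, sparse_of_card_fracSupport_le_one hα hv hl (hF ▸ hm), rfl, hv⟩
  obtain ⟨i, hi, j, hj, hij⟩ := one_lt_card.mp (hF ▸ not_le.mp hm)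
  obtain ⟨w₁, w₂, hseg, hw⟩ := exists_mem_segment_fracSupport_ssubset hv hi hj hij
  have hmem : ∀ w ∈ ({w₁, w₂} : Set (Fin n → ℝ)), w ∈ convexHull ℝ (sparseAtoms s α v) := by
    intro w hw'
    obtain ⟨hwα, hwl, hws, hwF⟩ := hw w hw'
    exact convexHull_mono (sparseAtoms_mono hws hwl)
      (ih _ (hF ▸ card_lt_card hwF) hwα (hwl ▸ hl) rfl)
  exact (convex_convexHull ℝ _).segment_subset (hmem _ (by simp)) (hmem _ (by simp)) hseg

theorem stmt3_general {n : ℕ} (s : ℕ) (α : ℝ) (hα : 0 < α) (v : Fin n → ℝ) :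
    ((∀ i, |v i| ≤ α) ∧ l1 v ≤ s * α) ↔
      v ∈ convexHull ℝ {u : Fin n → ℝ |
        Function.support u ⊆ Function.support v ∧ sparse s u ∧
          l1 u = l1 v ∧ ∀ i, |u i| ≤ α} :=
  ⟨fun ⟨hv, hl⟩ => mem_convexHull_sparseAtoms hα hv hl,
    fun h => convexHull_sparseAtoms_subset hα.le v h⟩

/-- sparse representation of a polytope. -/
theorem stmt3 {n : ℕ} (s : ℕ) (hs : 1 ≤ s) (α : ℝ) (hα : 0 < α) (v : Fin n → ℝ) :
    ((∀ i, |v i| ≤ α) ∧ l1 v ≤ s * α) ↔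
      v ∈ convexHull ℝ {u : Fin n → ℝ |
        Function.support u ⊆ Function.support v ∧ sparse s u ∧
          l1 u = l1 v ∧ ∀ i, |u i| ≤ α} :=
  stmt3_general s α hα v
end
end

section
/- Let A ∈ ℝ^{m×N}, 1 ≤ k ≤ N, and ‖·‖_X be a norm on ℝ^N. Suppose that for every index set I ⊆ {1,…,m} and every η₁ ∈ 𝒩(A_I), η₂ ∈ 𝒩(A_{I^c}) one has min{‖η₁‖_X, ‖η₂‖_X} ≤ (C₀/4)·σ_k(η₁ − η₂)_X + (C₀/4)·σ_k(η₁ + η₂)_X. Then there exists a decoder Δ: ℝ^m → ℝ^N such that for all x ∈ ℝ^N, min{‖x − Δ(|Ax|)‖_X, ‖x + Δ(|Ax|)‖_X} ≤ C₀·σ_k(x)_X. -/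
open Finset

noncomputable section

/-!
Decode `|Ax|` by a minimiser `z` of `σ_k` over the fibre `{z | |Az| = |Ax|}`, so that
`σ_k(z) ≤ σ_k(x)`. If `I` is the set of rows where `Az` and `Ax` have the same sign, then
`x - z ∈ 𝒩(A_I)` and `x + z ∈ 𝒩(A_{Iᶜ})`, and since `(x - z) - (x + z) = -2z` and
`(x - z) + (x + z) = 2x` the hypothesis gives
`min ‖x ∓ z‖_X ≤ (C₀/2) σ_k(z) + (C₀/2) σ_k(x) ≤ C₀ σ_k(x)`.
The minimiser exists because a norm on `ℝ^N` is continuous and coercive.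
-/

open Filter Topology Pointwise Matrix

namespace IsNorm

variable {N : ℕ} {X : (Fin N → ℝ) → ℝ}

lemma map_zero (hX : IsNorm X) : X 0 = 0 := by
  simpa using hX.2.1 0 0

lemma map_neg (hX : IsNorm X) (v : Fin N → ℝ) : X (-v) = X v := by
  simpa using hX.2.1 (-1) v

lemma nonneg (hX : IsNorm X) (v : Fin N → ℝ) : 0 ≤ X v := by
  have := hX.1 v (-v)
  rw [add_neg_cancel, hX.map_zero, hX.map_neg] at this
  linarith

lemma convexOn (hX : IsNorm X) : ConvexOn ℝ Set.univ X :=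
  ⟨convex_univ, fun x _ y _ a b ha hb _ => by
    calc X (a • x + b • y) ≤ X (a • x) + X (b • y) := hX.1 _ _
      _ = a • X x + b • X y := by
        rw [hX.2.1, hX.2.1, abs_of_nonneg ha, abs_of_nonneg hb, smul_eq_mul, smul_eq_mul]⟩

lemma continuous (hX : IsNorm X) : Continuous X :=
  hX.convexOn.locallyLipschitz.continuous

lemma map_eq_norm_mul (hX : IsNorm X) (v : Fin N → ℝ) : X v = ‖v‖ * X (‖v‖⁻¹ • v) := by
  rw [hX.2.1, abs_inv, abs_norm, ← mul_assoc]
  rcases eq_or_ne v 0 with rfl | hv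
  · simp [hX.map_zero]
  · rw [mul_inv_cancel₀ (norm_ne_zero_iff.2 hv), one_mul]

/-- `‖v‖` is the sup norm; `c` is the minimum of `X` on its compact unit sphere. -/
lemma exists_pos_mul_norm_le (hX : IsNorm X) : ∃ c > 0, ∀ v, c * ‖v‖ ≤ X v := by
  have hsphere : ∀ v : Fin N → ℝ, v ≠ 0 → ‖v‖⁻¹ • v ∈ Metric.sphere 0 1 := fun v hv => by
    simp [norm_smul, norm_ne_zero_iff.2 hv]
  obtain hS | hS := (Metric.sphere (0 : Fin N → ℝ) 1).eq_empty_or_nonempty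
  · refine ⟨1, one_pos, fun v => ?_⟩
    obtain rfl : v = 0 := by
      by_contra hv
      simpa [hS] using hsphere v hv
    simp [hX.map_zero]
  obtain ⟨v₁, hv₁, hmin⟩ := (isCompact_sphere 0 1).exists_isMinOn hS hX.continuous.continuousOn
  have hv₁0 : v₁ ≠ 0 := by
    rintro rfl
    simp at hv₁
  refine ⟨X v₁, (hX.nonneg v₁).lt_of_ne (fun h => hv₁0 (hX.2.2 _ h.symm)), fun v => ?_⟩
  rcases eq_or_ne v 0 with rfl | hv
  · simp [hX.map_zero]
  · rw [hX.map_eq_norm_mul v, mul_comm]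
    exact mul_le_mul_of_nonneg_left (hmin (hsphere v hv)) (norm_nonneg v)

lemma tendsto_cocompact_atTop (hX : IsNorm X) : Tendsto X (cocompact _) atTop := by
  obtain ⟨c, hc, hle⟩ := hX.exists_pos_mul_norm_le
  exact tendsto_atTop_mono hle (tendsto_norm_cocompact_atTop.const_mul_atTop hc)

lemma exists_isMinOn (hX : IsNorm X) {C : Set (Fin N → ℝ)} (hC : IsClosed C) (hne : C.Nonempty) :
    ∃ v ∈ C, IsMinOn X C v := by
  obtain ⟨v₀, hv₀⟩ := hne
  exact hX.continuous.continuousOn.exists_isMinOn' hC hv₀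
    ((hX.tendsto_cocompact_atTop.eventually_ge_atTop (X v₀)).filter_mono inf_le_left)

end IsNorm

section sigmaX

variable {N k : ℕ} {X : (Fin N → ℝ) → ℝ}

lemma sparse_zero : sparse k (0 : Fin N → ℝ) := by
  simp [sparse]

lemma sparse.smul {u : Fin N → ℝ} (hu : sparse k u) (c : ℝ) : sparse k (c • u) :=
  (Finset.card_le_card fun i => by simp +contextual).trans hu

lemma sparse_iff_exists_mem_pi {u : Fin N → ℝ} :
    sparse k u ↔
      ∃ S : Finset (Fin N), S.card ≤ k ∧ u ∈ Submodule.pi (↑S)ᶜ fun _ => (⊥ : Submodule ℝ ℝ) := by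
  constructor
  · intro hu
    exact ⟨_, hu, fun i hi => by simpa using hi⟩
  · rintro ⟨S, hS, hu⟩
    refine (Finset.card_le_card fun i hi => ?_).trans hS
    by_contra hiS
    exact (Finset.mem_filter.1 hi).2 (by simpa using hu i hiS)

lemma sigmaX_le (hX : IsNorm X) {x u : Fin N → ℝ} (hu : sparse k u) :
    sigmaX X k x ≤ X (x - u) :=
  csInf_le ⟨0, by rintro t ⟨z, -, rfl⟩; exact hX.nonneg _⟩ ⟨u, hu, rfl⟩

lemma le_sigmaX {x : Fin N → ℝ} {c : ℝ} (h : ∀ u, sparse k u → c ≤ X (x - u)) :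
    c ≤ sigmaX X k x :=
  le_csInf ⟨_, 0, sparse_zero, rfl⟩ fun _ ⟨u, hu, ht⟩ => ht ▸ h u hu

lemma sigmaX_nonneg (hX : IsNorm X) (x : Fin N → ℝ) : 0 ≤ sigmaX X k x :=
  le_sigmaX fun _ _ => hX.nonneg _

lemma sigmaX_smul_le (hX : IsNorm X) (c : ℝ) (x : Fin N → ℝ) :
    sigmaX X k (c • x) ≤ |c| * sigmaX X k x := by
  rw [sigmaX, sigmaX, ← smul_eq_mul, ← Real.sInf_smul_of_nonneg (abs_nonneg c)]
  refine le_csInf (Set.Nonempty.smul_set ⟨_, 0, sparse_zero, rfl⟩) ?_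
  rintro _ ⟨_, ⟨u, hu, rfl⟩, rfl⟩
  calc sigmaX X k (c • x) ≤ X (c • x - c • u) := sigmaX_le hX (hu.smul c)
    _ = |c| • X (x - u) := by rw [← smul_sub, hX.2.1, smul_eq_mul]

lemma sigmaX_smul (hX : IsNorm X) {c : ℝ} (hc : c ≠ 0) (x : Fin N → ℝ) :
    sigmaX X k (c • x) = |c| * sigmaX X k x := by
  refine (sigmaX_smul_le hX c x).antisymm ?_
  have := sigmaX_smul_le hX (k := k) c⁻¹ (c • x)
  rw [inv_smul_smul₀ hc, abs_inv] at this
  rwa [← le_inv_mul_iff₀ (abs_pos.2 hc)]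

end sigmaX

lemma abs_eq_abs_iff_exists_piecewise {ι : Type*} [Fintype ι] [DecidableEq ι] {w y : ι → ℝ} :
    (∀ i, |w i| = |y i|) ↔ ∃ I : Finset ι, w = I.piecewise y (-y) := by
  constructor
  · intro h
    refine ⟨Finset.univ.filter fun i => w i = y i, funext fun i => ?_⟩
    by_cases hi : w i = y i
    · simp [hi]
    · simpa [hi] using (abs_eq_abs.1 (h i)).resolve_left hi
  · rintro ⟨I, rfl⟩ i
    by_cases hi : i ∈ I <;> simp [hi]

section phaseless

variable {m N k : ℕ} (A : Matrix (Fin m) (Fin N) ℝ)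

lemma absMulVec_eq_iff {x z : Fin N → ℝ} :
    absMulVec A z = absMulVec A x ↔
      ∃ I : Finset (Fin m), A *ᵥ z = I.piecewise (A *ᵥ x) (-(A *ᵥ x)) :=
  funext_iff.trans abs_eq_abs_iff_exists_piecewise

/-- The fibre of `absMulVec A` is a union of `2^m` affine subspaces `A *ᵥ z = ±(A *ᵥ x)` and the
`k`-sparse vectors form a union of coordinate subspaces, so their difference is a finite union of
sets `{v | A *ᵥ v - c ∈ A(W)}`, each a preimage of a closed affine subspace. -/
lemma isClosed_absMulVec_fiber_sub_sparse (x : Fin N → ℝ) :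
    IsClosed (absMulVec A ⁻¹' {absMulVec A x} - {u | sparse k u}) := by
  let L := mulVecLin A
  let c (I : Finset (Fin m)) : Fin m → ℝ := I.piecewise (A *ᵥ x) (-(A *ᵥ x))
  have hunion : absMulVec A ⁻¹' {absMulVec A x} - {u | sparse k u} =
      ⋃ I : Finset (Fin m), ⋃ S ∈ {S : Finset (Fin N) | S.card ≤ k},
        (fun v => L v - c I) ⁻¹' ((Submodule.pi (↑S)ᶜ fun _ => (⊥ : Submodule ℝ ℝ)).map L) := by
    ext v
    simp only [Set.mem_sub, Set.mem_preimage, Set.mem_singleton_iff, Set.mem_ofPred_eq,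
      SetLike.mem_coe, Set.mem_iUnion, exists_prop, Submodule.mem_map, absMulVec_eq_iff,
      sparse_iff_exists_mem_pi]
    constructor
    · rintro ⟨z, ⟨I, hz⟩, u, ⟨S, hS, hu⟩, rfl⟩
      refine ⟨I, S, hS, -u, Submodule.neg_mem _ hu, ?_⟩
      simp [L, c, mulVec_sub, mulVec_neg, hz]
    · rintro ⟨I, S, hS, w, hw, hwv⟩
      refine ⟨v - w, ⟨I, ?_⟩, -w, ⟨S, hS, Submodule.neg_mem _ hw⟩, by abel⟩
      simp only [L, mulVecLin_apply] at hwv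
      rw [mulVec_sub, hwv, sub_sub_cancel]
  rw [hunion]
  refine isClosed_iUnion_of_finite fun I => (Set.toFinite _).isClosed_biUnion fun S _ => ?_
  exact (Submodule.closed_of_finiteDimensional _).preimage
    (L.continuous_of_finiteDimensional.sub continuous_const)

variable {X : (Fin N → ℝ) → ℝ}

lemma exists_isMinOn_sigmaX (hX : IsNorm X) (x : Fin N → ℝ) :
    ∃ z ∈ absMulVec A ⁻¹' {absMulVec A x},
      IsMinOn (sigmaX X k) (absMulVec A ⁻¹' {absMulVec A x}) z := by
  obtain ⟨_, ⟨z, hz, u, hu, rfl⟩, hmin⟩ := hX.exists_isMinOn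
    (isClosed_absMulVec_fiber_sub_sparse A (k := k) x) ⟨x - 0, Set.sub_mem_sub rfl sparse_zero⟩
  refine ⟨z, hz, fun w hw => ?_⟩
  exact (sigmaX_le hX hu).trans (le_sigmaX fun u' hu' => hmin (Set.sub_mem_sub hw hu'))

end phaseless

def PhaselessNullSpaceProperty {m N : ℕ} (A : Matrix (Fin m) (Fin N) ℝ)
    (X : (Fin N → ℝ) → ℝ) (k : ℕ) (C₀ : ℝ) : Prop :=
  ∀ I : Finset (Fin m), ∀ η₁ η₂ : Fin N → ℝ,
    (∀ i ∈ I, A.mulVec η₁ i = 0) → (∀ i ∉ I, A.mulVec η₂ i = 0) →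
    min (X η₁) (X η₂) ≤ C₀ / 4 * sigmaX X k (η₁ - η₂) + C₀ / 4 * sigmaX X k (η₁ + η₂)

namespace PhaselessNullSpaceProperty

variable {m N k : ℕ} {A : Matrix (Fin m) (Fin N) ℝ} {X : (Fin N → ℝ) → ℝ} {C₀ : ℝ}

lemma min_le (hP : PhaselessNullSpaceProperty A X k C₀) (hX : IsNorm X) {x z : Fin N → ℝ}
    (hz : absMulVec A z = absMulVec A x) :
    min (X (x - z)) (X (x + z)) ≤ C₀ / 2 * sigmaX X k z + C₀ / 2 * sigmaX X k x := by
  obtain ⟨I, hI⟩ := (absMulVec_eq_iff A).1 hz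
  have h := hP I (x - z) (x + z) (fun i hi => by simp [mulVec_sub, hI, hi])
    (fun i hi => by simp [mulVec_add, hI, hi])
  rw [show x - z - (x + z) = (-2 : ℝ) • z by module, show x - z + (x + z) = (2 : ℝ) • x by module,
    sigmaX_smul hX (by norm_num), sigmaX_smul hX (by norm_num), abs_neg, abs_two] at h
  linarith

lemma mul_sigmaX_nonneg (hP : PhaselessNullSpaceProperty A X k C₀) (hX : IsNorm X)
    (v : Fin N → ℝ) : 0 ≤ C₀ * sigmaX X k v := by
  have h := hP Finset.univ 0 v (by simp) (by simp)
  have hneg : sigmaX X k (-v) = sigmaX X k v := by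
    simpa using sigmaX_smul hX (k := k) (c := -1) (by norm_num) v
  rw [zero_sub, zero_add, hneg, hX.map_zero, min_eq_left (hX.nonneg v)] at h
  linarith

/-- For `C₀ < 0` the property forces `sigmaX X k = 0`. -/
lemma mul_sigmaX_le_mul_sigmaX (hP : PhaselessNullSpaceProperty A X k C₀) (hX : IsNorm X)
    {x z : Fin N → ℝ} (h : sigmaX X k z ≤ sigmaX X k x) :
    C₀ * sigmaX X k z ≤ C₀ * sigmaX X k x := by
  rcases le_or_gt 0 C₀ with hC | hC
  · exact mul_le_mul_of_nonneg_left h hC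
  · nlinarith [hP.mul_sigmaX_nonneg hX z, hP.mul_sigmaX_nonneg hX x, sigmaX_nonneg hX (k := k) x,
      sigmaX_nonneg hX (k := k) z]

end PhaselessNullSpaceProperty

theorem stmt7_general {m N k : ℕ}
    (A : Matrix (Fin m) (Fin N) ℝ) (X : (Fin N → ℝ) → ℝ) (hX : IsNorm X) (C₀ : ℝ)
    (h : ∀ I : Finset (Fin m), ∀ η₁ η₂ : Fin N → ℝ,
      (∀ i ∈ I, A.mulVec η₁ i = 0) → (∀ i ∉ I, A.mulVec η₂ i = 0) →
      min (X η₁) (X η₂) ≤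
        C₀ / 4 * sigmaX X k (η₁ - η₂) + C₀ / 4 * sigmaX X k (η₁ + η₂)) :
    ∃ Δ : (Fin m → ℝ) → (Fin N → ℝ), ∀ x : Fin N → ℝ,
      min (X (x - Δ (absMulVec A x))) (X (x + Δ (absMulVec A x))) ≤ C₀ * sigmaX X k x := by
  choose g hg_mem hg_min using exists_isMinOn_sigmaX A (k := k) hX
  refine ⟨fun y => g (Function.invFun (absMulVec A) y), fun x => ?_⟩
  have hx' : absMulVec A (Function.invFun (absMulVec A) (absMulVec A x)) = absMulVec A x :=
    Function.invFun_eq ⟨x, rfl⟩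
  set z := g (Function.invFun (absMulVec A) (absMulVec A x))
  have hz : absMulVec A z = absMulVec A x := (hg_mem _).trans hx'
  have hσ : sigmaX X k z ≤ sigmaX X k x := hg_min _ hx'.symm
  calc min (X (x - z)) (X (x + z))
      ≤ C₀ / 2 * sigmaX X k z + C₀ / 2 * sigmaX X k x :=
        PhaselessNullSpaceProperty.min_le h hX hz
    _ ≤ C₀ * sigmaX X k x := by
        linarith [PhaselessNullSpaceProperty.mul_sigmaX_le_mul_sigmaX h hX hσ]

/-- sufficient null space condition for phaseless instance optimality. -/
theorem stmt7 {m N k : ℕ} (hk1 : 1 ≤ k) (hkN : k ≤ N)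
    (A : Matrix (Fin m) (Fin N) ℝ) (X : (Fin N → ℝ) → ℝ) (hX : IsNorm X) (C₀ : ℝ)
    (h : ∀ I : Finset (Fin m), ∀ η₁ η₂ : Fin N → ℝ,
      (∀ i ∈ I, A.mulVec η₁ i = 0) → (∀ i ∉ I, A.mulVec η₂ i = 0) →
      min (X η₁) (X η₂) ≤
        C₀ / 4 * sigmaX X k (η₁ - η₂) + C₀ / 4 * sigmaX X k (η₁ + η₂)) :
    ∃ Δ : (Fin m → ℝ) → (Fin N → ℝ), ∀ x : Fin N → ℝ,
      min (X (x - Δ (absMulVec A x))) (X (x + Δ (absMulVec A x))) ≤ C₀ * sigmaX X k x :=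
  stmt7_general A X hX C₀ h
end
end
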